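/- arXiv:2511.02984 — 3 statements merged into one kernel-verified Lean document; each statement's English description precedes it below -/
import Mathlib

section
/- Consider a cOMARS design with 4n + n₀ runs obtained by concatenating two parent DSDs, each the foldover of an n×m conference design (m > 4, n even), plus n₀ center runs. Then the (Pearson) correlation between the quadratic-effect columns of any two distinct factors i and j equals (n₀(n−2) − 4)/((n−1)(n₀+4)). -/
open Finset Filter

/-- A conference design: mutually orthogonal columns, exactly one zero per column,
at most one zero per row, and ±1 entries elsewhere. -/
def IsConferenceDesign {n m : ℕ} (C : Matrix (Fin n) (Fin m) ℝ) : Prop :=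
  (∀ i j : Fin m, i ≠ j → ∑ r, C r i * C r j = 0) ∧
  (∀ j : Fin m, ∃! r : Fin n, C r j = 0) ∧
  (∀ r : Fin n, ∀ i j : Fin m, C r i = 0 → C r j = 0 → i = j) ∧
  (∀ r : Fin n, ∀ j : Fin m, C r j = 0 ∨ C r j = 1 ∨ C r j = -1)

/-- The foldover [C; -C] of a matrix C. -/
def foldover {n m : ℕ} (C : Matrix (Fin n) (Fin m) ℝ) :
    Matrix (Fin n ⊕ Fin n) (Fin m) ℝ :=
  fun r j => match r with
    | .inl a => C a j
    | .inr a => -C a j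

/-- A cOMARS design: two stacked parent DSDs (foldovers) plus n₀ center runs. -/
def cOMARS {n m : ℕ} (C₁ C₂ : Matrix (Fin n) (Fin m) ℝ) (n₀ : ℕ) :
    Matrix (((Fin n ⊕ Fin n) ⊕ (Fin n ⊕ Fin n)) ⊕ Fin n₀) (Fin m) ℝ :=
  fun r j => match r with
    | .inl (.inl a) => foldover C₁ a j
    | .inl (.inr a) => foldover C₂ a j
    | .inr _ => 0

/-- Pearson correlation of two columns of a model matrix. -/
noncomputable def pearson {ι : Type*} [Fintype ι] (u v : ι → ℝ) : ℝ :=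
  (∑ r, u r * v r - (∑ r, u r) * (∑ r, v r) / (Fintype.card ι)) /
    (Real.sqrt (∑ r, u r ^ 2 - (∑ r, u r) ^ 2 / (Fintype.card ι)) *
     Real.sqrt (∑ r, v r ^ 2 - (∑ r, v r) ^ 2 / (Fintype.card ι)))

/-! Squared entries of a conference design are the 0/1 indicators of its non-zero entries, and
distinct columns have their zeros in distinct rows. Since squaring is blind to the foldover sign
and the centre runs are zero, every quadratic column of the cOMARS design has sum and sum of
squares 4(n - 1), and two distinct ones have inner product 4(n - 2). With N = 4n + n₀ runs the
Pearson formula then reduces to the stated rational function of n and n₀. -/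

namespace IsConferenceDesign

variable {n m : ℕ} {C : Matrix (Fin n) (Fin m) ℝ}

theorem card_le (h : IsConferenceDesign C) : m ≤ n := by
  choose z hz _ using h.2.1
  have hz_inj : Function.Injective z := fun a b hab => h.2.2.1 (z a) a b (hz a) (hab ▸ hz b)
  simpa using Fintype.card_le_of_injective z hz_inj

theorem sq_sq (h : IsConferenceDesign C) (r : Fin n) (i : Fin m) :
    (C r i ^ 2) ^ 2 = C r i ^ 2 := by
  rcases h.2.2.2 r i with h' | h' | h' <;> simp [h']

theorem sq_eq_ite (h : IsConferenceDesign C) {i : Fin m} {r₀ : Fin n}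
    (h₀ : C r₀ i = 0) (hu : ∀ r, C r i = 0 → r = r₀) (r : Fin n) :
    C r i ^ 2 = if r = r₀ then 0 else 1 := by
  split_ifs with hr
  · simp [hr, h₀]
  · rcases h.2.2.2 r i with h' | h' | h'
    · exact absurd (hu r h') hr
    all_goals simp [h']

theorem sum_sq (h : IsConferenceDesign C) (i : Fin m) :
    ∑ r, C r i ^ 2 = n - 1 := by
  obtain ⟨r₀, h₀, hu⟩ := h.2.1 i
  simp [h.sq_eq_ite h₀ hu, Finset.sum_ite, Finset.filter_ne', Nat.cast_pred r₀.pos]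

theorem sum_sq_mul_sq (h : IsConferenceDesign C) {i j : Fin m} (hij : i ≠ j) :
    ∑ r, C r i ^ 2 * C r j ^ 2 = n - 2 := by
  obtain ⟨ri, hi, hui⟩ := h.2.1 i
  obtain ⟨rj, hj, huj⟩ := h.2.1 j
  have hr : ri ≠ rj := fun he => hij (h.2.2.1 ri i j hi (he ▸ hj))
  have hpt (r : Fin n) :
      C r i ^ 2 * C r j ^ 2 = 1 - (if r = ri then 1 else 0) - (if r = rj then 1 else 0) := by
    rw [h.sq_eq_ite hi hui, h.sq_eq_ite hj huj]
    split_ifs with hri hrj hrj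
    · exact absurd (hri.symm.trans hrj) hr
    all_goals norm_num
  simp [hpt, Finset.sum_sub_distrib]
  ring

end IsConferenceDesign

theorem sum_foldover_rows {n m : ℕ} (F : (Fin m → ℝ) → ℝ) (hF : ∀ x, F (-x) = F x)
    (C : Matrix (Fin n) (Fin m) ℝ) :
    ∑ r, F (foldover C r) = 2 * ∑ a, F (C a) := by
  have hneg (a : Fin n) : foldover C (.inr a) = -C a := rfl
  simp only [Fintype.sum_sum_type, hneg, hF]
  exact (two_mul _).symm

theorem sum_cOMARS_rows {n m : ℕ} (F : (Fin m → ℝ) → ℝ) (hF : ∀ x, F (-x) = F x)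
    (hF₀ : F 0 = 0) (C₁ C₂ : Matrix (Fin n) (Fin m) ℝ) (n₀ : ℕ) :
    ∑ r, F (cOMARS C₁ C₂ n₀ r) = 2 * ∑ a, F (C₁ a) + 2 * ∑ a, F (C₂ a) := by
  have hcentre (c : Fin n₀) : cOMARS C₁ C₂ n₀ (.inr c) = 0 := rfl
  calc ∑ r, F (cOMARS C₁ C₂ n₀ r) = ∑ r, F (foldover C₁ r) + ∑ r, F (foldover C₂ r) := by
        simp only [Fintype.sum_sum_type, hcentre, hF₀, Finset.sum_const_zero, add_zero]; rfl
    _ = 2 * ∑ a, F (C₁ a) + 2 * ∑ a, F (C₂ a) := by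
        rw [sum_foldover_rows F hF, sum_foldover_rows F hF]

theorem pearson_eq_of_moments {ι : Type*} [Fintype ι] {u v : ι → ℝ} {s q p : ℝ}
    (hu : ∑ r, u r = s) (hv : ∑ r, v r = s) (hu₂ : ∑ r, u r ^ 2 = q) (hv₂ : ∑ r, v r ^ 2 = q)
    (huv : ∑ r, u r * v r = p) (hvar : 0 ≤ q - s ^ 2 / Fintype.card ι) :
    pearson u v = (p - s ^ 2 / Fintype.card ι) / (q - s ^ 2 / Fintype.card ι) := by
  rw [pearson, hu, hv, hu₂, hv₂, huv, ← sq, Real.mul_self_sqrt hvar]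

section cOMARS

variable {n m : ℕ} {C₁ C₂ : Matrix (Fin n) (Fin m) ℝ}

theorem sum_cOMARS_sq (h₁ : IsConferenceDesign C₁) (h₂ : IsConferenceDesign C₂) (n₀ : ℕ)
    (k : Fin m) : ∑ r, cOMARS C₁ C₂ n₀ r k ^ 2 = 4 * ((n : ℝ) - 1) :=
  calc _ = 2 * ∑ a, C₁ a k ^ 2 + 2 * ∑ a, C₂ a k ^ 2 :=
        sum_cOMARS_rows (fun x => x k ^ 2) (by simp) (by simp) C₁ C₂ n₀
    _ = 4 * ((n : ℝ) - 1) := by rw [h₁.sum_sq, h₂.sum_sq]; ring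

theorem sum_cOMARS_sq_sq (h₁ : IsConferenceDesign C₁) (h₂ : IsConferenceDesign C₂) (n₀ : ℕ)
    (k : Fin m) : ∑ r, (cOMARS C₁ C₂ n₀ r k ^ 2) ^ 2 = 4 * ((n : ℝ) - 1) :=
  calc _ = 2 * ∑ a, (C₁ a k ^ 2) ^ 2 + 2 * ∑ a, (C₂ a k ^ 2) ^ 2 :=
        sum_cOMARS_rows (fun x => (x k ^ 2) ^ 2) (by simp) (by simp) C₁ C₂ n₀
    _ = 2 * ∑ a, C₁ a k ^ 2 + 2 * ∑ a, C₂ a k ^ 2 := by simp only [h₁.sq_sq, h₂.sq_sq]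
    _ = 4 * ((n : ℝ) - 1) := by rw [h₁.sum_sq, h₂.sum_sq]; ring

theorem sum_cOMARS_sq_mul_sq (h₁ : IsConferenceDesign C₁) (h₂ : IsConferenceDesign C₂)
    (n₀ : ℕ) {i j : Fin m} (hij : i ≠ j) :
    ∑ r, cOMARS C₁ C₂ n₀ r i ^ 2 * cOMARS C₁ C₂ n₀ r j ^ 2 = 4 * ((n : ℝ) - 2) :=
  calc _ = 2 * ∑ a, C₁ a i ^ 2 * C₁ a j ^ 2 + 2 * ∑ a, C₂ a i ^ 2 * C₂ a j ^ 2 :=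
        sum_cOMARS_rows (fun x => x i ^ 2 * x j ^ 2) (by simp) (by simp) C₁ C₂ n₀
    _ = 4 * ((n : ℝ) - 2) := by rw [h₁.sum_sq_mul_sq hij, h₂.sum_sq_mul_sq hij]; ring

end cOMARS

theorem stmt_5_general {n m n₀ : ℕ} (C₁ C₂ : Matrix (Fin n) (Fin m) ℝ)
    (h₁ : IsConferenceDesign C₁) (h₂ : IsConferenceDesign C₂)
    (i j : Fin m) (hij : i ≠ j) :
    pearson (fun r => (cOMARS C₁ C₂ n₀ r i) ^ 2) (fun r => (cOMARS C₁ C₂ n₀ r j) ^ 2)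
      = ((n₀ : ℝ) * ((n : ℝ) - 2) - 4) / (((n : ℝ) - 1) * ((n₀ : ℝ) + 4)) := by
  have hn : (2 : ℝ) ≤ n := by
    have hm : 2 ≤ m := by have := Fin.val_ne_of_ne hij; omega
    exact_mod_cast hm.trans h₁.card_le
  have hcard : (Fintype.card (((Fin n ⊕ Fin n) ⊕ (Fin n ⊕ Fin n)) ⊕ Fin n₀) : ℝ)
      = 4 * n + n₀ := by
    simp only [Fintype.card_sum, Fintype.card_fin]; push_cast; ring
  have hvar : 4 * ((n : ℝ) - 1) - (4 * ((n : ℝ) - 1)) ^ 2 / (4 * n + n₀)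
      = 4 * ((n : ℝ) - 1) * (n₀ + 4) / (4 * n + n₀) := by
    field_simp; ring
  rw [pearson_eq_of_moments (sum_cOMARS_sq h₁ h₂ n₀ i) (sum_cOMARS_sq h₁ h₂ n₀ j)
    (sum_cOMARS_sq_sq h₁ h₂ n₀ i) (sum_cOMARS_sq_sq h₁ h₂ n₀ j)
    (sum_cOMARS_sq_mul_sq h₁ h₂ n₀ hij), hcard, hvar]
  · field_simp
    ring
  · rw [hcard, hvar]
    have hn₁ : (0 : ℝ) ≤ n - 1 := by linarith
    positivity

theorem stmt_5 {n m n₀ : ℕ} (C₁ C₂ : Matrix (Fin n) (Fin m) ℝ)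
    (h₁ : IsConferenceDesign C₁) (h₂ : IsConferenceDesign C₂)
    (hm : 4 < m) (hn : Even n) (hn₀ : 1 ≤ n₀) (i j : Fin m) (hij : i ≠ j) :
    pearson (fun r => (cOMARS C₁ C₂ n₀ r i) ^ 2) (fun r => (cOMARS C₁ C₂ n₀ r j) ^ 2)
      = ((n₀ : ℝ) * ((n : ℝ) - 2) - 4) / (((n : ℝ) - 1) * ((n₀ : ℝ) + 4)) :=
  stmt_5_general C₁ C₂ h₁ h₂ i j hij
end

section
/- In a cOMARS design with 4n + n₀ runs built from two parent DSDs (foldovers of n×m conference designs, m > 4) and n₀ center runs, the absolute correlation between the quadratic-effect column of factor i and the two-factor interaction column of two other distinct factors j, k (with i ∉ {j,k}) takes one of exactly two values: sqrt((4n + n₀)/((n₀+4)(n−1)(n−2))) or 0. -/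
open Finset Filter

/-!
Every column of the model matrix is `F (row)` for a function `F` that is even and vanishes at
the centre point, so each sum over the runs of a cOMARS design is twice the corresponding sum
over the rows of `C₁` plus that over the rows of `C₂`. In a conference design the squared column
`x_i²` is the indicator of the rows other than the zero row of factor `i`, and distinct columns
are orthogonal. Hence the quadratic column `u` has `∑ u = ∑ u² = 4(n - 1)`, the interaction
column `v` has `∑ v = 0` and `∑ v² = 4(n - 2)`, and `∑ u v = -2(a + b)`, where `a, b = ±1` are
the values of `x_j x_k` in the zero rows of factor `i` in `C₁` and `C₂`. The correlation is
therefore `0` when `a = -b` and `∓4 / √(Var u · ∑ v²)` otherwise.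
-/

namespace IsConferenceDesign

variable {n m : ℕ} {C : Matrix (Fin n) (Fin m) ℝ}

theorem sq_eq_one_sub_ite (h : IsConferenceDesign C) {i : Fin m} {r₀ : Fin n}
    (h0 : C r₀ i = 0) (r : Fin n) : C r i ^ 2 = 1 - if r = r₀ then 1 else 0 := by
  split_ifs with hr
  · simp [hr, h0]
  · rcases h.2.2.2 r i with h1 | h1 | h1
    · exact absurd ((h.2.1 i).unique h1 h0) hr
    · simp [h1]
    · simp [h1]

theorem sum_sq_sq (h : IsConferenceDesign C) (i : Fin m) : ∑ r, (C r i ^ 2) ^ 2 = n - 1 := by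
  obtain ⟨r₀, h0, -⟩ := h.2.1 i
  rw [← h.sum_sq i]
  refine sum_congr rfl fun r _ => ?_
  rw [h.sq_eq_one_sub_ite h0]
  split_ifs <;> norm_num

theorem sum_mul_sq (h : IsConferenceDesign C) {j k : Fin m} (hjk : j ≠ k) :
    ∑ r, (C r j * C r k) ^ 2 = n - 2 := by
  obtain ⟨s, hs, -⟩ := h.2.1 j
  obtain ⟨t, ht, -⟩ := h.2.1 k
  have hst : s ≠ t := fun hst => hjk (h.2.2.1 s j k hs (hst ▸ ht))
  simp [mul_pow, h.sq_eq_one_sub_ite hs, h.sq_eq_one_sub_ite ht, mul_sub,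
    sum_sub_distrib, hst.symm]
  ring

theorem sum_sq_mul_mul (h : IsConferenceDesign C) {i j k : Fin m} (hjk : j ≠ k) {r₀ : Fin n}
    (h0 : C r₀ i = 0) : ∑ r, C r i ^ 2 * (C r j * C r k) = -(C r₀ j * C r₀ k) := by
  simp [h.sq_eq_one_sub_ite h0, sub_mul, sum_sub_distrib, h.1 j k hjk]

theorem mul_eq_one_or_neg_one (h : IsConferenceDesign C) {i j k : Fin m} (hij : i ≠ j)
    (hik : i ≠ k) {r₀ : Fin n} (h0 : C r₀ i = 0) :
    C r₀ j * C r₀ k = 1 ∨ C r₀ j * C r₀ k = -1 := by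
  have hj : C r₀ j ≠ 0 := fun hj => hij (h.2.2.1 r₀ i j h0 hj)
  have hk : C r₀ k ≠ 0 := fun hk => hik (h.2.2.1 r₀ i k h0 hk)
  rcases h.2.2.2 r₀ j with hJ | hJ | hJ <;> rcases h.2.2.2 r₀ k with hK | hK | hK <;> simp_all

end IsConferenceDesign

theorem sum_foldover_of_even {n m : ℕ} (C : Matrix (Fin n) (Fin m) ℝ)
    {F : (Fin m → ℝ) → ℝ} (heven : ∀ x, F (-x) = F x) :
    ∑ a, F (foldover C a) = 2 * ∑ a, F (C a) := by
  rw [Fintype.sum_sum_type, two_mul]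
  exact congrArg _ (sum_congr rfl fun a _ => heven (C a))

theorem sum_cOMARS_of_even {n m n₀ : ℕ} (C₁ C₂ : Matrix (Fin n) (Fin m) ℝ)
    {F : (Fin m → ℝ) → ℝ} (heven : ∀ x, F (-x) = F x) (hzero : F 0 = 0) :
    ∑ r, F (cOMARS C₁ C₂ n₀ r) = 2 * (∑ a, F (C₁ a) + ∑ a, F (C₂ a)) := by
  rw [Fintype.sum_sum_type, Fintype.sum_sum_type]
  change ∑ a, F (foldover C₁ a) + ∑ a, F (foldover C₂ a) + ∑ _ : Fin n₀, F 0 = _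
  rw [sum_foldover_of_even C₁ heven, sum_foldover_of_even C₂ heven, hzero, sum_const_zero]
  ring

theorem pearson_of_sum_right_eq_zero {ι : Type*} [Fintype ι] {u v : ι → ℝ}
    (hv : ∑ r, v r = 0) :
    pearson u v = (∑ r, u r * v r) /
      (√(∑ r, u r ^ 2 - (∑ r, u r) ^ 2 / Fintype.card ι) * √(∑ r, v r ^ 2)) := by
  simp [pearson, hv]

theorem four_div_sqrt_variances {n n₀ : ℝ} (hn : 2 < n) (hn₀ : 0 ≤ n₀) :
    4 / (√(4 * (n - 1) - (4 * (n - 1)) ^ 2 / (4 * n + n₀)) * √(4 * (n - 2))) =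
      √((4 * n + n₀) / ((n₀ + 4) * (n - 1) * (n - 2))) := by
  have hN : 0 < 4 * n + n₀ := by linarith
  have hvar : 4 * (n - 1) - (4 * (n - 1)) ^ 2 / (4 * n + n₀) =
      4 * (n - 1) * (n₀ + 4) / (4 * n + n₀) := by
    field_simp
    ring
  have hvar_pos : 0 < 4 * (n - 1) * (n₀ + 4) / (4 * n + n₀) := by
    apply div_pos _ hN
    nlinarith
  rw [hvar, ← Real.sqrt_mul hvar_pos.le, show (4 : ℝ) = √(4 ^ 2) by simp,
    ← Real.sqrt_div' _ (by nlinarith)]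
  congr 1
  have : n - 1 ≠ 0 := by linarith
  have : n - 2 ≠ 0 := by linarith
  field_simp
  ring

theorem pearson_cOMARS_sq_mul {n m n₀ : ℕ} {C₁ C₂ : Matrix (Fin n) (Fin m) ℝ}
    (h₁ : IsConferenceDesign C₁) (h₂ : IsConferenceDesign C₂) {i j k : Fin m} (hjk : j ≠ k)
    {r₁ r₂ : Fin n} (hr₁ : C₁ r₁ i = 0) (hr₂ : C₂ r₂ i = 0) :
    pearson (fun r => cOMARS C₁ C₂ n₀ r i ^ 2)
        (fun r => cOMARS C₁ C₂ n₀ r j * cOMARS C₁ C₂ n₀ r k) =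
      -2 * (C₁ r₁ j * C₁ r₁ k + C₂ r₂ j * C₂ r₂ k) /
        (√(4 * (n - 1) - (4 * (n - 1)) ^ 2 / (4 * n + n₀)) * √(4 * (n - 2))) := by
  have hv : ∑ r, cOMARS C₁ C₂ n₀ r j * cOMARS C₁ C₂ n₀ r k = 0 := by
    rw [sum_cOMARS_of_even C₁ C₂ (F := fun x => x j * x k) (by simp) (by simp),
      h₁.1 j k hjk, h₂.1 j k hjk]
    ring
  have hv2 : ∑ r, (cOMARS C₁ C₂ n₀ r j * cOMARS C₁ C₂ n₀ r k) ^ 2 = 4 * (n - 2) := by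
    rw [sum_cOMARS_of_even C₁ C₂ (F := fun x => (x j * x k) ^ 2) (by simp) (by simp),
      h₁.sum_mul_sq hjk, h₂.sum_mul_sq hjk]
    ring
  have hu : ∑ r, cOMARS C₁ C₂ n₀ r i ^ 2 = 4 * (n - 1) := by
    rw [sum_cOMARS_of_even C₁ C₂ (F := fun x => x i ^ 2) (by simp) (by simp), h₁.sum_sq,
      h₂.sum_sq]
    ring
  have hu2 : ∑ r, (cOMARS C₁ C₂ n₀ r i ^ 2) ^ 2 = 4 * (n - 1) := by
    rw [sum_cOMARS_of_even C₁ C₂ (F := fun x => (x i ^ 2) ^ 2) (by simp) (by simp),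
      h₁.sum_sq_sq, h₂.sum_sq_sq]
    ring
  have huv : ∑ r, cOMARS C₁ C₂ n₀ r i ^ 2 * (cOMARS C₁ C₂ n₀ r j * cOMARS C₁ C₂ n₀ r k) =
      -2 * (C₁ r₁ j * C₁ r₁ k + C₂ r₂ j * C₂ r₂ k) := by
    rw [sum_cOMARS_of_even C₁ C₂ (F := fun x => x i ^ 2 * (x j * x k)) (by simp) (by simp),
      h₁.sum_sq_mul_mul hjk hr₁, h₂.sum_sq_mul_mul hjk hr₂]
    ring
  have hcard :
      (Fintype.card (((Fin n ⊕ Fin n) ⊕ (Fin n ⊕ Fin n)) ⊕ Fin n₀) : ℝ) = 4 * n + n₀ := by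
    simp
    ring
  rw [pearson_of_sum_right_eq_zero hv, huv, hu, hu2, hv2, hcard]

theorem stmt_9_general {n m n₀ : ℕ} (C₁ C₂ : Matrix (Fin n) (Fin m) ℝ)
    (h₁ : IsConferenceDesign C₁) (h₂ : IsConferenceDesign C₂)
    (i j k : Fin m) (hij : i ≠ j) (hik : i ≠ k) (hjk : j ≠ k) :
    |pearson (fun r => (cOMARS C₁ C₂ n₀ r i) ^ 2)
        (fun r => cOMARS C₁ C₂ n₀ r j * cOMARS C₁ C₂ n₀ r k)|
      = Real.sqrt ((4 * (n : ℝ) + (n₀ : ℝ)) /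
          (((n₀ : ℝ) + 4) * ((n : ℝ) - 1) * ((n : ℝ) - 2))) ∨
    |pearson (fun r => (cOMARS C₁ C₂ n₀ r i) ^ 2)
        (fun r => cOMARS C₁ C₂ n₀ r j * cOMARS C₁ C₂ n₀ r k)| = 0 := by
  obtain ⟨r₁, hr₁, -⟩ := h₁.2.1 i
  obtain ⟨r₂, hr₂, -⟩ := h₂.2.1 i
  have hn : (2 : ℝ) < n := by
    have hm : 2 < m := by
      have := Fin.val_ne_of_ne hij
      have := Fin.val_ne_of_ne hik
      have := Fin.val_ne_of_ne hjk
      omega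
    exact_mod_cast hm.trans_le h₁.card_le
  have hab : |-2 * (C₁ r₁ j * C₁ r₁ k + C₂ r₂ j * C₂ r₂ k)| = 4 ∨
      |-2 * (C₁ r₁ j * C₁ r₁ k + C₂ r₂ j * C₂ r₂ k)| = 0 := by
    rcases h₁.mul_eq_one_or_neg_one hij hik hr₁ with ha | ha <;>
      rcases h₂.mul_eq_one_or_neg_one hij hik hr₂ with hb | hb <;> norm_num [ha, hb]
  rw [pearson_cOMARS_sq_mul h₁ h₂ hjk hr₁ hr₂, abs_div,
    abs_of_nonneg (mul_nonneg (Real.sqrt_nonneg _) (Real.sqrt_nonneg _))]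
  rcases hab with hab | hab <;> rw [hab]
  · exact Or.inl (four_div_sqrt_variances hn n₀.cast_nonneg)
  · exact Or.inr (zero_div _)

theorem stmt_9 {n m n₀ : ℕ} (C₁ C₂ : Matrix (Fin n) (Fin m) ℝ)
    (h₁ : IsConferenceDesign C₁) (h₂ : IsConferenceDesign C₂) (hm : 4 < m)
    (i j k : Fin m) (hij : i ≠ j) (hik : i ≠ k) (hjk : j ≠ k) :
    |pearson (fun r => (cOMARS C₁ C₂ n₀ r i) ^ 2)
        (fun r => cOMARS C₁ C₂ n₀ r j * cOMARS C₁ C₂ n₀ r k)|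
      = Real.sqrt ((4 * (n : ℝ) + (n₀ : ℝ)) /
          (((n₀ : ℝ) + 4) * ((n : ℝ) - 1) * ((n : ℝ) - 2))) ∨
    |pearson (fun r => (cOMARS C₁ C₂ n₀ r i) ^ 2)
        (fun r => cOMARS C₁ C₂ n₀ r j * cOMARS C₁ C₂ n₀ r k)| = 0 :=
  stmt_9_general C₁ C₂ h₁ h₂ i j k hij hik hjk
end

section
/- Let a cOMARS design be constructed by concatenating two parent DSDs, each with 2n runs obtained by folding over an n×m conference design, where n ≡ 0 (mod 4). Then for any four distinct columns, the J4-characteristic (absolute sum of the entries of the corresponding four-factor interaction column) belongs to the set {4n − 8λ : λ = 2, 3, …, n/2}. -/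
open Finset Filter

/-
Folding over doubles every four-factor sum and centre runs contribute nothing, so the cOMARS sum
is `2 (S₁ + S₂)`, where `S = ∑ᵣ x_{ri} x_{rj} x_{rk} x_{rl}` is the four-factor sum of a
conference design of order `n`. It then suffices that `4 ∣ S` and `|S| ≤ n - 4`.

On a row the four entries `u, v, w, y ∈ {0, ±1}` contain at most one zero. Then
`|uvwy| = u² + v² + w² + y² - 3`, and every column has `n - 1` nonzero entries, so
`|S| ≤ 4 (n - 1) - 3 n = n - 4`. For `a, b = ±1` one has `(1 - a)(1 - b) ∈ {0, 4}`, i.e.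
`ab ≡ a + b - 1 (mod 4)`; applied to the three ways of pairing up the four columns this gives
`3 uvwy ≡ e₂(u, v, w, y) - 3 (mod 4)`, with `e₂` the sum of the six pairwise products, and the
same congruence holds when one entry is zero. Summing over the rows, orthogonality makes the `e₂`
terms vanish, so `3 S ≡ -3 n ≡ 0 (mod 4)`.
-/

def fourFactorSum {ι κ R : Type*} [Fintype ι] [CommSemiring R] (X : Matrix ι κ R) (i j k l : κ) : R :=
  ∑ r, X r i * X r j * X r k * X r l

lemma fourFactorSum_map {ι κ R S : Type*} [Fintype ι] [CommSemiring R] [CommSemiring S]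
    (X : Matrix ι κ R) (f : R →+* S) (i j k l : κ) :
    fourFactorSum (X.map f) i j k l = f (fourFactorSum X i j k l) := by
  simp [fourFactorSum, map_sum]

lemma fourFactorSum_foldover {n m : ℕ} (C : Matrix (Fin n) (Fin m) ℝ) (i j k l : Fin m) :
    fourFactorSum (foldover C) i j k l = 2 * fourFactorSum C i j k l := by
  simp only [fourFactorSum, Fintype.sum_sum_type, foldover, neg_mul, mul_neg, neg_neg]
  ring

lemma fourFactorSum_cOMARS {n m : ℕ} (C₁ C₂ : Matrix (Fin n) (Fin m) ℝ) (n₀ : ℕ)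
    (i j k l : Fin m) :
    fourFactorSum (cOMARS C₁ C₂ n₀) i j k l =
      2 * fourFactorSum C₁ i j k l + 2 * fourFactorSum C₂ i j k l := by
  rw [fourFactorSum, Fintype.sum_sum_type, Fintype.sum_sum_type]
  simp only [cOMARS, mul_zero, sum_const_zero, add_zero]
  exact congrArg₂ (· + ·) (fourFactorSum_foldover C₁ i j k l) (fourFactorSum_foldover C₂ i j k l)

section Row

variable {α : Type*} {x : α → ℤ} {i j k l : α}

lemma three_mul_prod_modEq (hx : ∀ a, x a = 0 ∨ x a = 1 ∨ x a = -1)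
    (hx₀ : ∀ a b, x a = 0 → x b = 0 → a = b) (hij : i ≠ j) (hik : i ≠ k) (hil : i ≠ l)
    (hjk : j ≠ k) (hjl : j ≠ l) (hkl : k ≠ l) :
    3 * (x i * x j * x k * x l) ≡
      x i * x j + x i * x k + x i * x l + x j * x k + x j * x l + x k * x l - 3 [ZMOD 4] := by
  have := fun h h' => hij (hx₀ i j h h'); have := fun h h' => hik (hx₀ i k h h')
  have := fun h h' => hil (hx₀ i l h h'); have := fun h h' => hjk (hx₀ j k h h')
  have := fun h h' => hjl (hx₀ j l h h'); have := fun h h' => hkl (hx₀ k l h h')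
  rcases hx i with h₁ | h₁ | h₁ <;> rcases hx j with h₂ | h₂ | h₂ <;>
    rcases hx k with h₃ | h₃ | h₃ <;> rcases hx l with h₄ | h₄ | h₄ <;>
    simp only [h₁, h₂, h₃, h₄] at * <;> norm_num [Int.ModEq] at *

lemma abs_prod_eq_sum_sq_sub_three (hx : ∀ a, x a = 0 ∨ x a = 1 ∨ x a = -1)
    (hx₀ : ∀ a b, x a = 0 → x b = 0 → a = b) (hij : i ≠ j) (hik : i ≠ k) (hil : i ≠ l)
    (hjk : j ≠ k) (hjl : j ≠ l) (hkl : k ≠ l) :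
    |x i * x j * x k * x l| = x i ^ 2 + x j ^ 2 + x k ^ 2 + x l ^ 2 - 3 := by
  have := fun h h' => hij (hx₀ i j h h'); have := fun h h' => hik (hx₀ i k h h')
  have := fun h h' => hil (hx₀ i l h h'); have := fun h h' => hjk (hx₀ j k h h')
  have := fun h h' => hjl (hx₀ j l h h'); have := fun h h' => hkl (hx₀ k l h h')
  rcases hx i with h₁ | h₁ | h₁ <;> rcases hx j with h₂ | h₂ | h₂ <;>
    rcases hx k with h₃ | h₃ | h₃ <;> rcases hx l with h₄ | h₄ | h₄ <;>
    simp only [h₁, h₂, h₃, h₄] at * <;> norm_num at *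

end Row

namespace IsConferenceDesign

variable {n m : ℕ} {D : Matrix (Fin n) (Fin m) ℤ}

lemma exists_map_intCast {C : Matrix (Fin n) (Fin m) ℝ} (hC : IsConferenceDesign C) :
    ∃ D : Matrix (Fin n) (Fin m) ℤ, D.map (↑) = C := by
  refine ⟨Matrix.of fun r c => round (C r c), ?_⟩
  ext r c
  rcases hC.2.2.2 r c with h | h | h <;> norm_num [h, round_eq]

lemma int_entry_eq (hC : IsConferenceDesign (D.map (↑))) (r : Fin n) (c : Fin m) :
    D r c = 0 ∨ D r c = 1 ∨ D r c = -1 := by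
  have h := hC.2.2.2 r c
  simp only [Matrix.map_apply] at h
  exact_mod_cast h

lemma int_col_eq_of_eq_zero (hC : IsConferenceDesign (D.map (↑))) (r : Fin n) (a b : Fin m) :
    D r a = 0 → D r b = 0 → a = b := by
  simpa using hC.2.2.1 r a b

lemma int_sum_mul_eq_zero (hC : IsConferenceDesign (D.map (↑))) {a b : Fin m} (hab : a ≠ b) :
    ∑ r, D r a * D r b = 0 := by
  have h := hC.1 a b hab
  simp only [Matrix.map_apply] at h
  exact_mod_cast h

lemma int_sum_sq (hC : IsConferenceDesign (D.map (↑))) (c : Fin m) :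
    ∑ r, D r c ^ 2 = n - 1 := by
  obtain ⟨z, hz, hz_unique⟩ := hC.2.1 c
  have hsq : ∀ r, D r c ^ 2 = 1 - if r = z then 1 else 0 := by
    intro r
    split_ifs with hr
    · simp_all
    · have : D r c ≠ 0 := fun h => hr (hz_unique r (by simp [h]))
      rcases hC.int_entry_eq r c with h | h | h <;> simp_all
  simp [hsq, sum_sub_distrib]

variable {i j k l : Fin m}

lemma four_dvd_fourFactorSum (hC : IsConferenceDesign (D.map (↑))) (hn : 4 ∣ n)
    (hij : i ≠ j) (hik : i ≠ k) (hil : i ≠ l) (hjk : j ≠ k) (hjl : j ≠ l) (hkl : k ≠ l) :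
    4 ∣ fourFactorSum D i j k l := by
  unfold fourFactorSum
  have h := Int.ModEq.sum fun r (_ : r ∈ univ) =>
    three_mul_prod_modEq (hC.int_entry_eq r) (hC.int_col_eq_of_eq_zero r) hij hik hil hjk hjl hkl
  simp only [← mul_sum, sum_sub_distrib, sum_add_distrib, hC.int_sum_mul_eq_zero hij,
    hC.int_sum_mul_eq_zero hik, hC.int_sum_mul_eq_zero hil, hC.int_sum_mul_eq_zero hjk,
    hC.int_sum_mul_eq_zero hjl, hC.int_sum_mul_eq_zero hkl, sum_const, card_univ,
    Fintype.card_fin, nsmul_eq_mul] at h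
  have := h.dvd
  omega

lemma abs_fourFactorSum_le (hC : IsConferenceDesign (D.map (↑)))
    (hij : i ≠ j) (hik : i ≠ k) (hil : i ≠ l) (hjk : j ≠ k) (hjl : j ≠ l) (hkl : k ≠ l) :
    |fourFactorSum D i j k l| ≤ n - 4 :=
  calc |fourFactorSum D i j k l|
      ≤ ∑ r, |D r i * D r j * D r k * D r l| := abs_sum_le_sum_abs _ _
    _ = ∑ r, (D r i ^ 2 + D r j ^ 2 + D r k ^ 2 + D r l ^ 2 - 3) :=
      sum_congr rfl fun r _ => abs_prod_eq_sum_sq_sub_three (hC.int_entry_eq r)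
        (hC.int_col_eq_of_eq_zero r) hij hik hil hjk hjl hkl
    _ = n - 4 := by
      simp only [sum_sub_distrib, sum_add_distrib, hC.int_sum_sq, sum_const, card_univ,
        Fintype.card_fin, nsmul_eq_mul]
      ring

lemma exists_int_fourFactorSum {C : Matrix (Fin n) (Fin m) ℝ} (hC : IsConferenceDesign C)
    (hn : 4 ∣ n)
    (hij : i ≠ j) (hik : i ≠ k) (hil : i ≠ l) (hjk : j ≠ k) (hjl : j ≠ l) (hkl : k ≠ l) :
    ∃ s : ℤ, fourFactorSum C i j k l = s ∧ 4 ∣ s ∧ |s| ≤ n - 4 := by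
  obtain ⟨D, rfl⟩ := hC.exists_map_intCast
  exact ⟨fourFactorSum D i j k l, fourFactorSum_map D (Int.castRingHom ℝ) i j k l,
    hC.four_dvd_fourFactorSum hn hij hik hil hjk hjl hkl,
    hC.abs_fourFactorSum_le hij hik hil hjk hjl hkl⟩

end IsConferenceDesign

lemma exists_two_mul_abs_eq {n : ℕ} {s : ℤ} (hn : 4 ∣ n) (hs : 4 ∣ s)
    (hs_le : |s| ≤ 2 * n - 8) :
    ∃ lam : ℕ, 2 ≤ lam ∧ lam ≤ n / 2 ∧ 2 * |s| = 4 * (n : ℤ) - 8 * lam := by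
  rw [Int.abs_eq_natAbs] at hs_le ⊢
  exact ⟨n / 2 - s.natAbs / 4, by omega, by omega, by omega⟩

theorem stmt_12 {n m n₀ : ℕ} (C₁ C₂ : Matrix (Fin n) (Fin m) ℝ)
    (h₁ : IsConferenceDesign C₁) (h₂ : IsConferenceDesign C₂)
    (hn4 : n % 4 = 0)
    (i j k l : Fin m) (hij : i ≠ j) (hik : i ≠ k) (hil : i ≠ l)
    (hjk : j ≠ k) (hjl : j ≠ l) (hkl : k ≠ l) :
    ∃ lam : ℕ, 2 ≤ lam ∧ lam ≤ n / 2 ∧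
      |∑ r, cOMARS C₁ C₂ n₀ r i * cOMARS C₁ C₂ n₀ r j *
          cOMARS C₁ C₂ n₀ r k * cOMARS C₁ C₂ n₀ r l|
        = 4 * (n : ℝ) - 8 * (lam : ℝ) := by
  have hn : 4 ∣ n := Nat.dvd_of_mod_eq_zero hn4
  obtain ⟨s₁, hs₁, hd₁, hb₁⟩ := h₁.exists_int_fourFactorSum hn hij hik hil hjk hjl hkl
  obtain ⟨s₂, hs₂, hd₂, hb₂⟩ := h₂.exists_int_fourFactorSum hn hij hik hil hjk hjl hkl
  obtain ⟨lam, hlam₂, hlam_le, hlam⟩ :=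
    exists_two_mul_abs_eq hn (dvd_add hd₁ hd₂) ((abs_add_le s₁ s₂).trans (by omega))
  refine ⟨lam, hlam₂, hlam_le, ?_⟩
  change |fourFactorSum (cOMARS C₁ C₂ n₀) i j k l| = _
  rw [fourFactorSum_cOMARS, hs₁, hs₂, ← mul_add, abs_mul, abs_two]
  exact_mod_cast hlam
end
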